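/- arXiv:1604.05578 — 3 statements merged into one kernel-verified Lean document; each statement's English description precedes it below -/
import Mathlib

section
/- For a smooth rapidly decreasing function F on (-∞,0] and any complex s with Re(s) < 0 and any natural number n, the fractional derivative satisfies D(F)(s) = D(F^{(n)})(s-n), where D(F)(s) = (1/Γ(-s)) ∫_0^∞ u^{-s-1} F(-u) du. -/
open MeasureTheory Complex Set Filter Topology


lemma aux_integrable (f : ℝ → ℂ) (hf : Continuous f)
    (hdec : ∀ m : ℕ, Tendsto (fun t : ℝ => |t| ^ m * ‖f t‖) atBot (nhds 0))
    (a : ℂ) (ha : -1 < a.re) :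
    IntegrableOn (fun u : ℝ => (u : ℂ) ^ a * f (-u)) (Ioi 0) := by
  set m : ℕ := ⌈a.re⌉₊ + 2 with hm
  have hma : a.re + 1 < m := by
    have := Nat.le_ceil a.re
    push_cast [hm]
    linarith
  have htop : (fun t : ℝ => f (-t)) =O[atTop] (· ^ (-(m : ℝ))) := by
    have h0 : Tendsto (fun t : ℝ => |(-t)| ^ m * ‖f (-t)‖) atTop (nhds 0) :=
      (hdec m).comp tendsto_neg_atTop_atBot
    rw [Asymptotics.isBigO_iff]
    refine ⟨1, ?_⟩
    have h1 : ∀ᶠ t : ℝ in atTop, |(-t)| ^ m * ‖f (-t)‖ ≤ 1 :=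
      h0.eventually (eventually_le_nhds one_pos)
    filter_upwards [h1, eventually_ge_atTop (1 : ℝ)] with t ht ht1
    have ht0 : (0:ℝ) < t := lt_of_lt_of_le one_pos ht1
    have habs : |(-t)| = t := by rw [abs_neg, abs_of_pos ht0]
    rw [habs] at ht
    have htm : (0:ℝ) < t ^ m := pow_pos ht0 m
    rw [Real.norm_eq_abs, Real.abs_rpow_of_nonneg ht0.le, abs_of_pos ht0,
      Real.rpow_neg ht0.le, Real.rpow_natCast, one_mul,
      ← one_div, le_div_iff₀ htm, mul_comm]
    exact ht
  have hbot : (fun t : ℝ => f (-t)) =O[𝓝[>] (0:ℝ)] (· ^ (-(0:ℝ))) := by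
    have : (fun t : ℝ => t ^ (-(0:ℝ))) = fun _ : ℝ => (1:ℝ) := by
      funext t; rw [neg_zero, Real.rpow_zero]
    rw [this]
    have : Tendsto (fun t : ℝ => f (-t)) (𝓝[>] (0:ℝ)) (𝓝 (f 0)) := by
      have := ((hf.comp continuous_neg).tendsto 0)
      simpa [Function.comp_def] using this.mono_left nhdsWithin_le_nhds
    exact this.isBigO_one ℝ
  have hfc : LocallyIntegrableOn (fun t : ℝ => f (-t)) (Ioi 0) :=
    ((hf.comp continuous_neg).locallyIntegrable).locallyIntegrableOn _
  have := mellinConvergent_of_isBigO_rpow (s := a + 1) hfc htop (by simpa using hma) hbot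
    (by simp only [add_re, one_re]; linarith)
  rw [MellinConvergent] at this
  simpa [add_sub_cancel_right, smul_eq_mul] using this

-- tendsto at atTop of u^c * f(-u)
lemma aux_tendsto (f : ℝ → ℂ)
    (hdec : ∀ m : ℕ, Tendsto (fun t : ℝ => |t| ^ m * ‖f t‖) atBot (nhds 0))
    (c : ℂ) :
    Tendsto (fun u : ℝ => (u : ℂ) ^ c * f (-u)) atTop (nhds 0) := by
  set m : ℕ := ⌈c.re⌉₊ + 1 with hm
  have hmc : c.re ≤ m := by
    have := Nat.le_ceil c.re
    push_cast [hm]; linarith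
  have h0 : Tendsto (fun t : ℝ => |(-t)| ^ m * ‖f (-t)‖) atTop (nhds 0) :=
    (hdec m).comp tendsto_neg_atTop_atBot
  apply squeeze_zero_norm' _ h0
  filter_upwards [eventually_ge_atTop (1:ℝ)] with t ht1
  have ht0 : (0:ℝ) < t := lt_of_lt_of_le one_pos ht1
  have habs : |(-t)| = t := by rw [abs_neg, abs_of_pos ht0]
  rw [habs, norm_mul,
    Complex.norm_cpow_eq_rpow_re_of_pos ht0]
  gcongr
  calc t ^ c.re ≤ t ^ (m:ℝ) := Real.rpow_le_rpow_of_exponent_le ht1 hmc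
    _ = t ^ m := Real.rpow_natCast t m

lemma aux_key (F : ℝ → ℂ) (hF : ContDiff ℝ (⊤ : ℕ∞) F)
    (hdecay : ∀ m n : ℕ, Tendsto (fun t : ℝ => |t| ^ m * ‖iteratedDeriv n F t‖)
      atBot (nhds 0))
    (s : ℂ) (hs : s.re < 0) (k : ℕ) :
    ((k : ℂ) - s) * ∫ u in Ioi (0:ℝ), (u:ℂ) ^ ((k:ℂ) - s - 1) * iteratedDeriv k F (-u)
      = ∫ u in Ioi (0:ℝ), (u:ℂ) ^ (((k:ℂ) + 1) - s - 1) * iteratedDeriv (k+1) F (-u) := by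
  have hcontD : ∀ j : ℕ, Continuous (iteratedDeriv j F) := fun j =>
    (hF.differentiable_iteratedDeriv j (by exact_mod_cast WithTop.natCast_lt_top j)).continuous
  have hder : ∀ (j : ℕ) (x : ℝ), HasDerivAt (iteratedDeriv j F) (iteratedDeriv (j+1) F x) x := by
    intro j x
    rw [iteratedDeriv_succ]
    exact ((hF.differentiable_iteratedDeriv j (by exact_mod_cast WithTop.natCast_lt_top j)) x).hasDerivAt
  set c : ℂ := (k : ℂ) - s with hc
  have hcre : 0 < c.re := by
    simp only [hc, sub_re, natCast_re]
    have : (0:ℝ) ≤ k := Nat.cast_nonneg k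
    linarith
  set g : ℝ → ℂ := fun u => (u:ℂ) ^ c * iteratedDeriv k F (-u) with hg
  set g' : ℝ → ℂ := fun u =>
    c * ((u:ℂ) ^ (c - 1) * iteratedDeriv k F (-u)) - (u:ℂ) ^ c * iteratedDeriv (k+1) F (-u)
    with hg'
  have hint1 : IntegrableOn (fun u : ℝ => (u:ℂ) ^ (c - 1) * iteratedDeriv k F (-u)) (Ioi 0) := by
    apply aux_integrable _ (hcontD k) (fun m => hdecay m k)
    simp only [sub_re, one_re]; linarith
  have hint2 : IntegrableOn (fun u : ℝ => (u:ℂ) ^ c * iteratedDeriv (k+1) F (-u)) (Ioi 0) := by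
    apply aux_integrable _ (hcontD (k+1)) (fun m => hdecay m (k+1))
    linarith
  have hg'int : IntegrableOn g' (Ioi 0) := (hint1.const_mul c).sub hint2
  have hderiv : ∀ x ∈ Ioi (0:ℝ), HasDerivAt g (g' x) x := by
    intro x hx
    have hx0 : (0:ℝ) < x := hx
    have h1 : HasDerivAt (fun u : ℝ => ((u:ℝ):ℂ) ^ c) (c * (x:ℂ) ^ (c - 1)) x := by
      apply HasDerivAt.comp_ofReal (e := fun z : ℂ => z ^ c)
      exact (Complex.hasStrictDerivAt_cpow_const
        (by rw [Complex.mem_slitPlane_iff]; left; simpa using hx0)).hasDerivAt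
    have h2 : HasDerivAt (fun u : ℝ => iteratedDeriv k F (-u))
        (-(iteratedDeriv (k+1) F (-x))) x := by
      have hd := (differentiableAt_comp_neg.mpr
        ((hF.differentiable_iteratedDeriv k (by exact_mod_cast WithTop.natCast_lt_top k)) (-x))).hasDerivAt
      rwa [deriv_comp_neg, ← iteratedDeriv_succ] at hd
    have := h1.mul h2
    refine this.congr_deriv ?_
    simp only [hg']
    ring
  have hcont0 : ContinuousWithinAt g (Ici (0:ℝ)) 0 := by
    have hg0 : g 0 = 0 := by
      simp only [hg, ofReal_zero]
      rw [Complex.zero_cpow (by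
        intro h; rw [h] at hcre; simp at hcre), zero_mul]
    rw [ContinuousWithinAt, hg0]
    obtain ⟨C, hC⟩ := (isCompact_Icc (a := (0:ℝ)) (b := 1)).exists_bound_of_continuousOn
      (((hcontD k).comp continuous_neg).continuousOn)
    have hC0 : 0 ≤ C := le_trans (norm_nonneg _) (hC 0 ⟨le_refl _, zero_le_one⟩)
    apply squeeze_zero_norm' (a := fun u : ℝ => C * |u| ^ c.re)
    · have hmem : Icc (0:ℝ) 1 ∈ 𝓝[Ici (0:ℝ)] 0 := by
        rw [← Ici_inter_Iic]
        exact inter_mem self_mem_nhdsWithin (nhdsWithin_le_nhds (Iic_mem_nhds one_pos))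
      filter_upwards [hmem] with u hu
      have hu0 : 0 ≤ u := hu.1
      rw [hg, norm_mul, Complex.norm_cpow_eq_rpow_re_of_nonneg hu0 hcre.ne',
        _root_.abs_of_nonneg hu0, mul_comm C]
      gcongr
      simpa using hC u hu
    · have : ContinuousAt (fun u : ℝ => C * |u| ^ c.re) 0 := by
        apply ContinuousAt.mul continuousAt_const
        exact (Real.continuousAt_rpow_const _ _ (Or.inr hcre.le)).comp continuous_abs.continuousAt
      have h0 : (fun u : ℝ => C * |u| ^ c.re) 0 = 0 := by
        simp [Real.zero_rpow hcre.ne']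
      have h2 := this.continuousWithinAt (s := Ici (0:ℝ))
      rw [ContinuousWithinAt] at h2
      simpa [abs_zero, Real.zero_rpow hcre.ne'] using h2
  have htop : Tendsto g atTop (𝓝 0) := aux_tendsto _ (fun m => hdecay m k) c
  have hftc : ∫ u in Ioi (0:ℝ), g' u = 0 - g 0 :=
    integral_Ioi_of_hasDerivAt_of_tendsto hcont0 hderiv hg'int htop
  have hg0 : g 0 = 0 := by
    simp only [hg, ofReal_zero]
    rw [Complex.zero_cpow (by intro h; rw [h] at hcre; simp at hcre), zero_mul]
  rw [hg0, sub_zero] at hftc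
  have hsplit : ∫ u in Ioi (0:ℝ), g' u
      = c * (∫ u in Ioi (0:ℝ), (u:ℂ) ^ (c - 1) * iteratedDeriv k F (-u))
        - ∫ u in Ioi (0:ℝ), (u:ℂ) ^ c * iteratedDeriv (k+1) F (-u) := by
    rw [hg']
    rw [integral_sub (hint1.const_mul c) hint2, integral_const_mul]
  rw [hsplit] at hftc
  have hceq : ((k:ℂ) + 1) - s - 1 = c := by rw [hc]; ring
  rw [hceq]
  have := sub_eq_zero.mp hftc
  rw [hc] at this ⊢
  simp only [sub_sub] at this ⊢
  linear_combination this

/-- For a smooth rapidly decreasing function `F` on `(-∞,0]`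
(here modelled as `F : ℝ → ℂ` smooth with all derivatives decaying faster than
any polynomial at `-∞`), for any `s : ℂ` with `Re s < 0` and any `n : ℕ`,
`(1/Γ(-s)) ∫_0^∞ u^{-s-1} F(-u) du = (1/Γ(n-s)) ∫_{-∞}^0 F^{(n)}(u) (-u)^{n-s-1} du`. -/
theorem stmt0 (F : ℝ → ℂ) (hF : ContDiff ℝ (⊤ : ℕ∞) F)
    (hdecay : ∀ m n : ℕ, Filter.Tendsto (fun t : ℝ => |t| ^ m * ‖iteratedDeriv n F t‖)
      Filter.atBot (nhds 0))
    (s : ℂ) (hs : s.re < 0) (n : ℕ) :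
    (1 / Complex.Gamma (-s)) * ∫ u in Set.Ioi (0:ℝ), (u:ℂ) ^ (-s - 1) * F (-u)
      = (1 / Complex.Gamma (n - s)) *
        ∫ u in Set.Iio (0:ℝ), iteratedDeriv n F u * ((-u : ℝ) : ℂ) ^ ((n : ℂ) - s - 1) := by
  have hne : ∀ k : ℕ, ((k:ℂ) - s) ≠ 0 := by
    intro k h
    have h2 : ((k:ℂ) - s).re = 0 := by rw [h]; simp
    simp only [sub_re, natCast_re] at h2
    have hk : (0:ℝ) ≤ k := Nat.cast_nonneg k
    linarith
  have hΓne : ∀ k : ℕ, Complex.Gamma ((k:ℂ) - s) ≠ 0 := by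
    intro k
    apply Complex.Gamma_ne_zero_of_re_pos
    simp only [sub_re, natCast_re]
    have hk : (0:ℝ) ≤ k := Nat.cast_nonneg k
    linarith
  have main : ∀ k : ℕ,
      (1 / Complex.Gamma (-s)) * ∫ u in Ioi (0:ℝ), (u:ℂ) ^ (-s - 1) * F (-u)
        = (1 / Complex.Gamma ((k:ℂ) - s)) *
          ∫ u in Ioi (0:ℝ), (u:ℂ) ^ ((k:ℂ) - s - 1) * iteratedDeriv k F (-u) := by
    intro k
    induction k with
    | zero => norm_num
    | succ k ih =>
      rw [ih]
      have hkey := aux_key F hF hdecay s hs k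
      have hΓ : Complex.Gamma (((k+1:ℕ):ℂ) - s) = ((k:ℂ) - s) * Complex.Gamma ((k:ℂ) - s) := by
        have h1 : (((k+1:ℕ)):ℂ) - s = ((k:ℂ) - s) + 1 := by push_cast; ring
        rw [h1, Complex.Gamma_add_one _ (hne k)]
      have hexp : (((k+1:ℕ)):ℂ) - s - 1 = ((k:ℂ) + 1) - s - 1 := by push_cast; ring
      rw [hexp, ← hkey, hΓ]
      field_simp
      rw [mul_div_mul_left _ _ (hne k)]
  rw [main n]
  congr 1
  have h := integral_comp_neg_Iic (0:ℝ)
    (fun x : ℝ => iteratedDeriv n F (-x) * ((x:ℝ):ℂ) ^ ((n:ℂ) - s - 1))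
  simp only [neg_neg, neg_zero] at h
  rw [← integral_Iic_eq_integral_Iio, h]
  refine setIntegral_congr_fun measurableSet_Ioi fun x hx => mul_comm _ _
end

section
/- For a smooth rapidly decreasing function F on (-∞,0], the function s ↦ D(F)(s) = (1/Γ(-s)) ∫_0^∞ u^{-s-1} F(-u) du, initially defined for Re(s) < 0, extends uniquely to an entire holomorphic function on ℂ. -/
open MeasureTheory Complex Set Filter Asymptotics
open scoped ContDiff

namespace Stmt1Aux

/-- Rapid decay at `-∞` gives big-O bounds of `u ↦ G (-u)` at `+∞` against any `rpow`. -/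
lemma aux_top {G : ℝ → ℂ}
    (h : ∀ m : ℕ, Tendsto (fun t : ℝ => |t| ^ m * ‖G t‖) atBot (nhds 0)) (a : ℝ) :
    (fun u : ℝ => G (-u)) =O[atTop] (fun t : ℝ => t ^ (-a)) := by
  obtain ⟨m, hm⟩ := exists_nat_ge a
  have h2 : Tendsto (fun u : ℝ => |(-u)| ^ m * ‖G (-u)‖) atTop (nhds 0) :=
    (h m).comp tendsto_neg_atTop_atBot
  have h3 : ∀ᶠ u in atTop, |(-u)| ^ m * ‖G (-u)‖ < 1 :=
    h2.eventually_lt_const one_pos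
  rw [isBigO_iff]
  refine ⟨1, ?_⟩
  filter_upwards [h3, eventually_ge_atTop (1 : ℝ)] with u hu hu1
  have hu0 : (0:ℝ) < u := lt_of_lt_of_le one_pos hu1
  have habs : |(-u)| = u := by rw [abs_neg, abs_of_pos hu0]
  rw [habs] at hu
  have hpow : (0:ℝ) < u ^ m := pow_pos hu0 m
  have hb1 : ‖G (-u)‖ ≤ (u ^ m)⁻¹ := by
    rw [inv_eq_one_div, le_div_iff₀ hpow]
    nlinarith [norm_nonneg (G (-u))]
  have hb2 : (u ^ m : ℝ)⁻¹ = u ^ (-(m:ℝ)) := by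
    rw [Real.rpow_neg hu0.le, Real.rpow_natCast]
  have hb3 : u ^ (-(m:ℝ)) ≤ u ^ (-a) :=
    Real.rpow_le_rpow_of_exponent_le hu1 (neg_le_neg hm)
  have hnorm : ‖(fun t : ℝ => t ^ (-a)) u‖ = u ^ (-a) := by
    simp only [Real.norm_eq_abs, abs_of_pos (Real.rpow_pos_of_pos hu0 _)]
  rw [hnorm, one_mul]
  calc ‖G (-u)‖ ≤ (u ^ m)⁻¹ := hb1
    _ = u ^ (-(m:ℝ)) := hb2
    _ ≤ u ^ (-a) := hb3

lemma aux_bot {G : ℝ → ℂ} (hc : Continuous G) :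
    (fun u : ℝ => G (-u)) =O[nhdsWithin 0 (Set.Ioi 0)] (fun t : ℝ => t ^ (-(0:ℝ))) := by
  have : (fun t : ℝ => t ^ (-(0:ℝ))) = fun _ : ℝ => (1:ℝ) := by
    funext t; rw [neg_zero, Real.rpow_zero]
  rw [this]
  have ht : Tendsto (fun u : ℝ => G (-u)) (nhdsWithin 0 (Set.Ioi 0)) (nhds (G 0)) := by
    have := (hc.comp continuous_neg).tendsto 0
    simpa [Function.comp_def] using this.mono_left nhdsWithin_le_nhds
  exact ht.isBigO_one ℝ

lemma aux_locInt {G : ℝ → ℂ} (hc : Continuous G) :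
    LocallyIntegrableOn (fun u : ℝ => G (-u)) (Set.Ioi 0) := by
  exact ((hc.comp continuous_neg).locallyIntegrable).locallyIntegrableOn _

/-- Key integration by parts step. -/
lemma aux_step {G Gd : ℝ → ℂ} (hGc : Continuous G) (hGdc : Continuous Gd)
    (hder : ∀ x : ℝ, HasDerivAt G (Gd x) x)
    (hG : ∀ m : ℕ, Tendsto (fun t : ℝ => |t| ^ m * ‖G t‖) atBot (nhds 0))
    (hGd : ∀ m : ℕ, Tendsto (fun t : ℝ => |t| ^ m * ‖Gd t‖) atBot (nhds 0))
    {z : ℂ} (hz : 0 < z.re) :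
    mellin (fun u : ℝ => Gd (-u)) (z + 1) = z * mellin (fun u : ℝ => G (-u)) z := by
  have hzne : z ≠ 0 := fun h => by simp [h] at hz
  -- integrability of the two integrands
  have hI1 : IntegrableOn (fun u : ℝ => (u:ℂ) ^ (z - 1) * G (-u)) (Set.Ioi 0) := by
    have := mellinConvergent_of_isBigO_rpow (aux_locInt hGc) (aux_top hG (z.re + 1))
      (by linarith) (aux_bot hGc) hz
    simpa [MellinConvergent, smul_eq_mul] using this
  have hI2 : IntegrableOn (fun u : ℝ => (u:ℂ) ^ z * Gd (-u)) (Set.Ioi 0) := by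
    have := mellinConvergent_of_isBigO_rpow (aux_locInt hGdc) (aux_top hGd (z.re + 2))
      (by simp [Complex.add_re]; try linarith) (aux_bot hGdc) (by simp [Complex.add_re]; try linarith :
        (0:ℝ) < (z + 1).re)
    simpa [MellinConvergent, smul_eq_mul, add_sub_cancel_right] using this
  set φ : ℝ → ℂ := fun u => (u:ℂ) ^ z * G (-u) with hφ
  have hφderiv : ∀ u ∈ Set.Ioi (0:ℝ),
      HasDerivAt φ (z * ((u:ℂ) ^ (z - 1) * G (-u)) - (u:ℂ) ^ z * Gd (-u)) u := by
    intro u hu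
    have hu0 : (u:ℝ) ≠ 0 := ne_of_gt hu
    have h1 : HasDerivAt (fun y : ℝ => ((y:ℂ) ^ z)) (z * (u:ℂ) ^ (z - 1)) u := by
      have hne : z - 1 ≠ -1 := by
        intro h
        exact hzne (by linear_combination h)
      have h0 := hasDerivAt_ofReal_cpow_const' hu0 hne
      simp only [sub_add_cancel] at h0
      have h0' := h0.const_mul z
      have hfe : (fun y : ℝ => z * ((y:ℂ) ^ z / z)) = fun y : ℝ => (y:ℂ) ^ z := by
        funext y; field_simp
      rwa [hfe] at h0'
    have h2 : HasDerivAt (fun y : ℝ => G (-y)) (-(Gd (-u))) u := by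
      have := HasDerivAt.scomp (𝕜 := ℝ) u (hder (-u)) (hasDerivAt_neg u)
      simpa [Function.comp_def] using this
    have := h1.mul h2
    convert this using 1
    case e'_8 => rfl
    case e'_9 => ring
    case e'_4 => rfl
  have hφcont : ContinuousWithinAt φ (Set.Ici 0) 0 :=
    (((continuous_ofReal_cpow_const hz).mul (hGc.comp continuous_neg)).continuousWithinAt)
  have hφ0 : φ 0 = 0 := by
    simp [hφ, Complex.ofReal_zero, Complex.zero_cpow hzne]
  have hφtop : Tendsto φ atTop (nhds 0) := by
    rw [tendsto_zero_iff_norm_tendsto_zero]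
    obtain ⟨m, hm⟩ := exists_nat_ge z.re
    have h2 : Tendsto (fun u : ℝ => |(-u)| ^ m * ‖G (-u)‖) atTop (nhds 0) :=
      (hG m).comp tendsto_neg_atTop_atBot
    apply squeeze_zero' (Eventually.of_forall fun u => norm_nonneg _) _ h2
    filter_upwards [eventually_ge_atTop (1:ℝ)] with u hu1
    have hu0 : (0:ℝ) < u := lt_of_lt_of_le one_pos hu1
    have habs : |(-u)| = u := by rw [abs_neg, abs_of_pos hu0]
    rw [habs]
    have h3 : ‖φ u‖ = u ^ z.re * ‖G (-u)‖ := by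
      simp only [hφ, norm_mul]
      rw [Complex.norm_cpow_eq_rpow_re_of_pos hu0]
    rw [h3]
    have h4 : u ^ z.re ≤ (u:ℝ) ^ m := by
      rw [← Real.rpow_natCast u m]
      exact Real.rpow_le_rpow_of_exponent_le hu1 hm
    exact mul_le_mul_of_nonneg_right h4 (norm_nonneg _)
  have hint : IntegrableOn
      (fun u : ℝ => z * ((u:ℂ) ^ (z - 1) * G (-u)) - (u:ℂ) ^ z * Gd (-u)) (Set.Ioi 0) :=
    (hI1.const_mul z).sub hI2
  have key := integral_Ioi_of_hasDerivAt_of_tendsto hφcont hφderiv hint hφtop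
  rw [hφ0, zero_sub, neg_zero] at key
  have hsplit : (∫ u in Set.Ioi (0:ℝ),
      (z * ((u:ℂ) ^ (z - 1) * G (-u)) - (u:ℂ) ^ z * Gd (-u)))
      = z * (∫ u in Set.Ioi (0:ℝ), (u:ℂ) ^ (z - 1) * G (-u))
        - ∫ u in Set.Ioi (0:ℝ), (u:ℂ) ^ z * Gd (-u) := by
    rw [integral_sub (hI1.const_mul z) hI2, integral_const_mul]
  rw [hsplit] at key
  have : mellin (fun u : ℝ => Gd (-u)) (z + 1)
      = ∫ u in Set.Ioi (0:ℝ), (u:ℂ) ^ z * Gd (-u) := by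
    simp [mellin, smul_eq_mul, add_sub_cancel_right]
  rw [this]
  have : mellin (fun u : ℝ => G (-u)) z
      = ∫ u in Set.Ioi (0:ℝ), (u:ℂ) ^ (z - 1) * G (-u) := by
    simp [mellin, smul_eq_mul]
  rw [this]
  linear_combination -key

end Stmt1Aux

open Stmt1Aux

/-- For a smooth rapidly decreasing function `F` on `(-∞,0]`, the map
`s ↦ D(F)(s) = (1/Γ(-s)) ∫_0^∞ u^{-s-1} F(-u) du`, defined for `Re s < 0`, extends
uniquely to an entire holomorphic function on `ℂ`. -/
theorem stmt1 (F : ℝ → ℂ) (hF : ContDiff ℝ (⊤ : ℕ∞) F)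
    (hdecay : ∀ m n : ℕ, Filter.Tendsto (fun t : ℝ => |t| ^ m * ‖iteratedDeriv n F t‖)
      Filter.atBot (nhds 0)) :
    ∃! g : ℂ → ℂ, Differentiable ℂ g ∧
      ∀ s : ℂ, s.re < 0 →
        g s = (1 / Complex.Gamma (-s)) * ∫ u in Set.Ioi (0:ℝ), (u:ℂ) ^ (-s - 1) * F (-u) := by
  set G : ℕ → ℝ → ℂ := fun n => iteratedDeriv n F with hGdef
  have hGsmooth : ∀ n, ContDiff ℝ ∞ (G n) := by
    intro n
    simp only [hGdef, iteratedDeriv_eq_iterate]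
    exact ContDiff.iterate_deriv n (hF.of_le (by simp))
  have hGcont : ∀ n, Continuous (G n) := fun n => (hGsmooth n).continuous
  have hGderiv : ∀ n x, HasDerivAt (G n) (G (n + 1) x) x := by
    intro n x
    have h1 : DifferentiableAt ℝ (G n) x :=
      ((hGsmooth n).differentiable (by norm_num)).differentiableAt
    have h2 := h1.hasDerivAt
    rwa [show deriv (G n) x = G (n + 1) x from by
      simp only [hGdef, iteratedDeriv_succ]] at h2
  have hGdecay : ∀ n (m : ℕ),
      Tendsto (fun t : ℝ => |t| ^ m * ‖G n t‖) atBot (nhds 0) :=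
    fun n m => hdecay m n
  -- the family of candidate extensions
  set M : ℕ → ℂ → ℂ := fun n s =>
    (1 / Complex.Gamma ((n:ℂ) - s)) * mellin (fun u : ℝ => G n (-u)) ((n:ℂ) - s) with hMdef
  have hre : ∀ (n : ℕ) (s : ℂ), ((n:ℂ) - s).re = n - s.re := by
    intro n s; simp [Complex.sub_re]
  -- differentiability of M n on re < n
  have hMdiff : ∀ (n : ℕ) (s : ℂ), s.re < n → DifferentiableAt ℂ (M n) s := by
    intro n s hs
    have h1 : DifferentiableAt ℂ (fun w : ℂ => 1 / Complex.Gamma ((n:ℂ) - w)) s := by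
      have := (Complex.differentiable_one_div_Gamma.comp
        ((differentiable_const ((n:ℂ))).sub differentiable_fun_id)).differentiableAt
        (x := s)
      simpa [Function.comp_def, Pi.sub_def, one_div] using this
    have h2 : DifferentiableAt ℂ (fun w : ℂ => mellin (fun u : ℝ => G n (-u)) ((n:ℂ) - w)) s := by
      have hm : DifferentiableAt ℂ (mellin (fun u : ℝ => G n (-u))) ((n:ℂ) - s) := by
        apply mellin_differentiableAt_of_isBigO_rpow (aux_locInt (hGcont n))
          (aux_top (hGdecay n) (n - s.re + 1)) _ (aux_bot (hGcont n))
        · rw [hre]; linarith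
        · rw [hre]; linarith
      exact hm.comp s (((differentiableAt_const ((n:ℂ))).sub differentiableAt_fun_id))
    exact h1.mul h2
  -- M n = M (n+1) on re < n
  have hstep : ∀ (n : ℕ) (s : ℂ), s.re < n → M n s = M (n + 1) s := by
    intro n s hs
    set z : ℂ := (n:ℂ) - s with hz
    have hz0 : 0 < z.re := by rw [hz, hre]; linarith
    have hzne : z ≠ 0 := fun h => by simp [h] at hz0
    have hΓ : Complex.Gamma (z + 1) = z * Complex.Gamma z := Complex.Gamma_add_one z hzne
    have hΓne : Complex.Gamma z ≠ 0 := Complex.Gamma_ne_zero_of_re_pos hz0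
    have hcast : ((n + 1 : ℕ):ℂ) - s = z + 1 := by push_cast [hz]; ring
    have hmel := aux_step (hGcont n) (hGcont (n + 1)) (hGderiv n)
      (hGdecay n) (hGdecay (n + 1)) hz0
    simp only [hMdef, hcast, ← hz, hmel, hΓ]
    field_simp
  -- M n = M m on re < n for n ≤ m
  have hmono : ∀ (n m : ℕ) (s : ℂ), n ≤ m → s.re < n → M n s = M m s := by
    intro n m s hnm hs
    induction m, hnm using Nat.le_induction with
    | base => rfl
    | succ m hnm ih =>
      rw [ih, hstep m s (lt_of_lt_of_le hs (by exact_mod_cast hnm))]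
  set g : ℂ → ℂ := fun s => M (⌊s.re⌋₊ + 1) s with hgdef
  have hg_eq : ∀ (n : ℕ) (s : ℂ), s.re < n → g s = M n s := by
    intro n s hs
    have hk : s.re < (⌊s.re⌋₊ + 1 : ℕ) := by
      push_cast
      exact Nat.lt_floor_add_one _
    rcases le_total (⌊s.re⌋₊ + 1) n with h | h
    · exact hmono _ n s h hk
    · exact (hmono n _ s h hs).symm
  have hgdiff : Differentiable ℂ g := by
    intro s
    set n : ℕ := ⌊s.re⌋₊ + 1 with hn
    have hsn : s.re < n := by rw [hn]; push_cast; exact Nat.lt_floor_add_one _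
    have hU : {w : ℂ | w.re < n} ∈ nhds s :=
      (isOpen_lt Complex.continuous_re continuous_const).mem_nhds hsn
    refine (hMdiff n s hsn).congr_of_eventuallyEq ?_
    filter_upwards [hU] with w hw
    exact hg_eq n w hw
  have hgform : ∀ s : ℂ, s.re < 0 →
      g s = (1 / Complex.Gamma (-s)) * ∫ u in Set.Ioi (0:ℝ), (u:ℂ) ^ (-s - 1) * F (-u) := by
    intro s hs
    rw [hg_eq 0 s (by exact_mod_cast hs)]
    simp [hMdef, Nat.cast_zero, zero_sub, mellin, smul_eq_mul, hGdef, iteratedDeriv_zero]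
  refine ⟨g, ⟨hgdiff, hgform⟩, ?_⟩
  rintro g' ⟨hg'diff, hg'form⟩
  have h1 : AnalyticOnNhd ℂ g' Set.univ := analyticOnNhd_univ_iff_differentiable.mpr hg'diff
  have h2 : AnalyticOnNhd ℂ g Set.univ := analyticOnNhd_univ_iff_differentiable.mpr hgdiff
  refine AnalyticOnNhd.eq_of_eventuallyEq h1 h2 (z₀ := -1) ?_
  have hU : {w : ℂ | w.re < 0} ∈ nhds (-1 : ℂ) := by
    refine (isOpen_lt Complex.continuous_re continuous_const).mem_nhds ?_
    simp
  filter_upwards [hU] with w hw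
  rw [hg'form w hw, hgform w hw]
end

section
/- For a smooth rapidly decreasing function F on (-∞,0] and every natural number n, the entire extension of the fractional derivative satisfies D(F)(n) = F^{(n)}(0), the usual n-th derivative of F at 0. -/
open MeasureTheory Complex Filter Asymptotics Set Topology

namespace Stmt2Aux

noncomputable def fk (F : ℝ → ℂ) (k : ℕ) : ℝ → ℂ := fun u => iteratedDeriv k F (-u)

variable {F : ℝ → ℂ}

theorem fk_continuous (hF : ContDiff ℝ (⊤ : ℕ∞) F) (k : ℕ) : Continuous (fk F k) :=
  (hF.continuous_iteratedDeriv k (by exact_mod_cast le_top)).comp continuous_neg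

theorem fk_hasDerivAt (hF : ContDiff ℝ (⊤ : ℕ∞) F) (k : ℕ) (u : ℝ) :
    HasDerivAt (fk F k) (-(fk F (k + 1) u)) u := by
  have h1 : HasDerivAt (iteratedDeriv k F) (iteratedDeriv (k + 1) F (-u)) (-u) := by
    rw [iteratedDeriv_succ]
    exact ((hF.differentiable_iteratedDeriv k (by exact_mod_cast ENat.coe_lt_top k)) (-u)).hasDerivAt
  have h2 : HasDerivAt (fun x : ℝ => -x) (-1 : ℝ) u := (hasDerivAt_id u).neg
  have h3 : HasDerivAt (iteratedDeriv k F ∘ fun x : ℝ => -x)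
      ((-1 : ℝ) • iteratedDeriv (k + 1) F (-u)) u :=
    HasDerivAt.scomp (x := u) (h := fun x : ℝ => -x) h1 h2
  have hfk : fk F k = iteratedDeriv k F ∘ fun x : ℝ => -x := rfl
  rw [hfk]
  simpa [fk] using h3

theorem fk_tendsto
    (hdecay : ∀ m n : ℕ, Filter.Tendsto (fun t : ℝ => |t| ^ m * ‖iteratedDeriv n F t‖)
      Filter.atBot (nhds 0)) (k m : ℕ) :
    Tendsto (fun u : ℝ => u ^ m * ‖fk F k u‖) atTop (𝓝 0) := by
  have h := (hdecay m k).comp tendsto_neg_atTop_atBot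
  apply h.congr'
  filter_upwards [eventually_gt_atTop (0 : ℝ)] with u hu
  simp [fk, Function.comp, abs_of_pos hu]

theorem fk_isBigO_top
    (hdecay : ∀ m n : ℕ, Filter.Tendsto (fun t : ℝ => |t| ^ m * ‖iteratedDeriv n F t‖)
      Filter.atBot (nhds 0)) (k m : ℕ) :
    (fk F k) =O[atTop] fun u : ℝ => u ^ (-(m : ℝ)) := by
  rw [isBigO_iff]
  refine ⟨1, ?_⟩
  have h1 := (fk_tendsto hdecay k m).eventually_lt_const (by norm_num : (0:ℝ) < 1)
  filter_upwards [h1, eventually_gt_atTop (0 : ℝ)] with u hu h0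
  have hup : (0 : ℝ) < u ^ m := pow_pos h0 m
  have hnorm : ‖u ^ (-(m : ℝ))‖ = (u ^ m)⁻¹ := by
    rw [Real.norm_eq_abs, abs_of_pos (Real.rpow_pos_of_pos h0 _), Real.rpow_neg h0.le,
      Real.rpow_natCast]
  rw [hnorm, one_mul, ← one_div, le_div_iff₀ hup]
  nlinarith [hu, norm_nonneg (fk F k u)]

theorem fk_isBigO_zero (hF : ContDiff ℝ (⊤ : ℕ∞) F) (k : ℕ) :
    (fk F k) =O[nhdsWithin 0 (Set.Ioi 0)] fun u : ℝ => u ^ (-(0 : ℝ)) := by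
  have h : (fun u : ℝ => u ^ (-(0 : ℝ))) = fun _ : ℝ => (1 : ℝ) := by
    funext u; simp
  rw [h]
  exact (((fk_continuous hF k).tendsto 0).mono_left nhdsWithin_le_nhds).isBigO_one ℝ

theorem fk_locInt (hF : ContDiff ℝ (⊤ : ℕ∞) F) (k : ℕ) :
    LocallyIntegrableOn (fk F k) (Set.Ioi 0) :=
  ((fk_continuous hF k).locallyIntegrable).locallyIntegrableOn _

theorem fk_mellinConvergent (hF : ContDiff ℝ (⊤ : ℕ∞) F)
    (hdecay : ∀ m n : ℕ, Filter.Tendsto (fun t : ℝ => |t| ^ m * ‖iteratedDeriv n F t‖)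
      Filter.atBot (nhds 0)) (k : ℕ) {w : ℂ} (hw : 0 < w.re) :
    MellinConvergent (fk F k) w := by
  obtain ⟨m, hm⟩ := exists_nat_gt w.re
  exact mellinConvergent_of_isBigO_rpow (fk_locInt hF k) (fk_isBigO_top hdecay k m) hm
    (fk_isBigO_zero hF k) (by simpa using hw)

theorem fk_mellin_diffAt (hF : ContDiff ℝ (⊤ : ℕ∞) F)
    (hdecay : ∀ m n : ℕ, Filter.Tendsto (fun t : ℝ => |t| ^ m * ‖iteratedDeriv n F t‖)
      Filter.atBot (nhds 0)) (k : ℕ) {w : ℂ} (hw : 0 < w.re) :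
    DifferentiableAt ℂ (mellin (fk F k)) w := by
  obtain ⟨m, hm⟩ := exists_nat_gt w.re
  exact mellin_differentiableAt_of_isBigO_rpow (fk_locInt hF k) (fk_isBigO_top hdecay k m) hm
    (fk_isBigO_zero hF k) (by simpa using hw)

theorem fk_ibp (hF : ContDiff ℝ (⊤ : ℕ∞) F)
    (hdecay : ∀ m n : ℕ, Filter.Tendsto (fun t : ℝ => |t| ^ m * ‖iteratedDeriv n F t‖)
      Filter.atBot (nhds 0)) (k : ℕ) {w : ℂ} (hw : 0 < w.re) :
    w * mellin (fk F k) w = mellin (fk F (k + 1)) (w + 1) := by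
  have hw0 : w ≠ 0 := fun h => by simp [h] at hw
  set Φ : ℝ → ℂ := fun u => (u : ℂ) ^ w * fk F k u with hΦ
  set Φ' : ℝ → ℂ := fun u => w * ((u : ℂ) ^ (w - 1) * fk F k u) - (u : ℂ) ^ w * fk F (k + 1) u
    with hΦ'
  -- derivative
  have hderiv : ∀ u ∈ Set.Ioi (0 : ℝ), HasDerivAt Φ (Φ' u) u := by
    intro u hu
    have hu0 : (u : ℝ) ≠ 0 := ne_of_gt hu
    have hr : w - 1 ≠ -1 := by
      intro h; apply hw0; linear_combination h
    have hc : HasDerivAt (fun y : ℝ => (y : ℂ) ^ ((w - 1) + 1) / ((w - 1) + 1)) ((u : ℂ) ^ (w - 1)) u :=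
      hasDerivAt_ofReal_cpow_const' hu0 hr
    have hc2 : HasDerivAt (fun y : ℝ => (y : ℂ) ^ w) (w * (u : ℂ) ^ (w - 1)) u := by
      have := hc.const_mul w
      have heq : (fun y : ℝ => w * ((y : ℂ) ^ ((w - 1) + 1) / ((w - 1) + 1))) =
          fun y : ℝ => (y : ℂ) ^ w := by
        funext y
        rw [sub_add_cancel]
        field_simp
      rw [heq] at this
      exact this
    have := hc2.mul (fk_hasDerivAt hF k u)
    refine this.congr_deriv ?_
    simp only [hΦ']
    ring
  have hcont : ContinuousWithinAt Φ (Set.Ici 0) 0 :=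
    ((continuous_ofReal_cpow_const hw).mul (fk_continuous hF k)).continuousWithinAt
  -- limit at infinity
  have htop : Tendsto Φ atTop (𝓝 0) := by
    obtain ⟨m, hm⟩ := exists_nat_gt w.re
    refine squeeze_zero_norm' ?_ (fk_tendsto hdecay k m)
    filter_upwards [eventually_ge_atTop (1 : ℝ)] with u hu
    have h0 : (0 : ℝ) < u := lt_of_lt_of_le one_pos hu
    have hΦu : Φ u = (u : ℂ) ^ w * fk F k u := rfl
    rw [hΦu, norm_mul,
      norm_cpow_eq_rpow_re_of_pos h0]
    gcongr
    calc u ^ w.re ≤ u ^ (m : ℝ) := Real.rpow_le_rpow_of_exponent_le hu hm.le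
      _ = u ^ m := Real.rpow_natCast u m
  -- integrability of the derivative
  have i1 : IntegrableOn (fun u : ℝ => (u : ℂ) ^ (w - 1) • fk F k u) (Set.Ioi 0) :=
    fk_mellinConvergent hF hdecay k hw
  have i2 : IntegrableOn (fun u : ℝ => (u : ℂ) ^ w • fk F (k + 1) u) (Set.Ioi 0) := by
    have : MellinConvergent (fk F (k + 1)) (w + 1) :=
      fk_mellinConvergent hF hdecay (k + 1) (by simp; positivity)
    simpa [MellinConvergent, add_sub_cancel_right] using this
  have i1' : IntegrableOn (fun u : ℝ => w * ((u : ℂ) ^ (w - 1) * fk F k u)) (Set.Ioi 0) := by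
    simpa [smul_eq_mul, Pi.smul_def, IntegrableOn] using (i1.smul w)
  have i2' : IntegrableOn (fun u : ℝ => (u : ℂ) ^ w * fk F (k + 1) u) (Set.Ioi 0) := by
    simpa [smul_eq_mul] using i2
  have hint : IntegrableOn Φ' (Set.Ioi 0) := i1'.sub i2'
  have key := integral_Ioi_of_hasDerivAt_of_tendsto hcont hderiv hint htop
  have hΦ0 : Φ 0 = 0 := by
    simp [hΦ, Complex.ofReal_zero, Complex.zero_cpow hw0]
  rw [hΦ0, sub_zero] at key
  -- expand the integral
  have expand : ∫ u in Set.Ioi (0:ℝ), Φ' u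
      = w * mellin (fk F k) w - mellin (fk F (k + 1)) (w + 1) := by
    rw [hΦ', integral_sub i1' i2', integral_const_mul]
    congr 1
    all_goals simp [mellin, smul_eq_mul, add_sub_cancel_right]
  rw [expand] at key
  linear_combination key

end Stmt2Aux

open Stmt2Aux


open MeasureTheory Complex

/-- If `g` is the entire extension of the fractional-derivative function
`s ↦ (1/Γ(-s)) ∫_0^∞ u^{-s-1} F(-u) du` of a smooth rapidly decreasing `F`, then for every
natural number `n`, `g n = F^{(n)}(0)`, the usual `n`-th derivative of `F` at `0`. -/
theorem stmt2 (F : ℝ → ℂ) (hF : ContDiff ℝ (⊤ : ℕ∞) F)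
    (hdecay : ∀ m n : ℕ, Filter.Tendsto (fun t : ℝ => |t| ^ m * ‖iteratedDeriv n F t‖)
      Filter.atBot (nhds 0))
    (g : ℂ → ℂ) (hg : Differentiable ℂ g)
    (hext : ∀ s : ℂ, s.re < 0 →
      g s = (1 / Complex.Gamma (-s)) * ∫ u in Set.Ioi (0:ℝ), (u:ℂ) ^ (-s - 1) * F (-u)) :
    ∀ n : ℕ, g n = iteratedDeriv n F 0 := by
  intro n
  set h : ℕ → ℂ → ℂ :=
    fun k s => (1 / Complex.Gamma ((k : ℂ) - s)) * mellin (fk F k) ((k : ℂ) - s) with hh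
  have hdiff : ∀ k : ℕ, DifferentiableOn ℂ (h k) {s : ℂ | s.re < (k : ℝ)} := by
    intro k s hs
    have hs' : s.re < (k : ℝ) := hs
    have hw : 0 < ((k : ℂ) - s).re := by
      rw [Complex.sub_re, Complex.natCast_re]; linarith
    apply DifferentiableAt.differentiableWithinAt
    apply DifferentiableAt.mul
    · have h1 : DifferentiableAt ℂ (fun z : ℂ => 1 / Complex.Gamma z) ((k : ℂ) - s) := by
        simpa [one_div] using (Complex.differentiable_one_div_Gamma ((k : ℂ) - s))
      exact h1.comp s ((differentiableAt_const _).sub differentiableAt_id)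
    · exact (fk_mellin_diffAt hF hdecay k hw).comp s
        ((differentiableAt_const _).sub differentiableAt_id)
  have hstep : ∀ (k : ℕ) (s : ℂ), s.re < (k : ℝ) → h k s = h (k + 1) s := by
    intro k s hs
    have hw : 0 < ((k : ℂ) - s).re := by
      rw [Complex.sub_re, Complex.natCast_re]; linarith
    have hw0 : (k : ℂ) - s ≠ 0 := fun hc => by simp [hc] at hw
    have hG : Complex.Gamma ((k : ℂ) - s) ≠ 0 := Complex.Gamma_ne_zero_of_re_pos hw
    have hcast : ((k + 1 : ℕ) : ℂ) - s = ((k : ℂ) - s) + 1 := by push_cast; ring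
    have hibp := fk_ibp hF hdecay k hw
    simp only [hh]
    rw [hcast, ← hibp, Complex.Gamma_add_one _ hw0]
    field_simp
  have main : ∀ (k : ℕ) (s : ℂ), s.re < (k : ℝ) → g s = h k s := by
    intro k
    induction k with
    | zero =>
      intro s hs
      rw [hext s (by simpa using hs)]
      simp only [hh, Nat.cast_zero, zero_sub]
      simp [mellin, fk, smul_eq_mul]
    | succ k ih =>
      set U : Set ℂ := {s : ℂ | s.re < ((k + 1 : ℕ) : ℝ)} with hU
      have hUopen : IsOpen U := isOpen_lt Complex.continuous_re continuous_const
      have hUconn : IsPreconnected U := (convex_halfSpace_re_lt _).isPreconnected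
      have hganU : AnalyticOnNhd ℂ g U := hg.differentiableOn.analyticOnNhd hUopen
      have hhU : AnalyticOnNhd ℂ (h (k + 1)) U := (hdiff (k + 1)).analyticOnNhd hUopen
      have hz0 : ((k : ℂ) - 1) ∈ U := by
        simp only [hU, Set.mem_setOf_eq, Complex.sub_re, Complex.natCast_re, Complex.one_re]
        push_cast; linarith
      have hfg : g =ᶠ[nhds ((k : ℂ) - 1)] h (k + 1) := by
        have hVopen : IsOpen {s : ℂ | s.re < (k : ℝ)} :=
          isOpen_lt Complex.continuous_re continuous_const
        have hz0V : ((k : ℂ) - 1) ∈ {s : ℂ | s.re < (k : ℝ)} := by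
          simp only [Set.mem_setOf_eq, Complex.sub_re, Complex.natCast_re, Complex.one_re]
          linarith
        filter_upwards [hVopen.mem_nhds hz0V] with s hs
        exact (ih s hs).trans (hstep k s hs)
      intro s hs
      exact hganU.eqOn_of_preconnected_of_eventuallyEq hhU hUconn hz0 hfg hs
  have h1 : g n = h (n + 1) n := by
    apply main (n + 1) n
    rw [Complex.natCast_re]; push_cast; linarith
  have hcast : ((n + 1 : ℕ) : ℂ) - (n : ℂ) = 1 := by push_cast; ring
  rw [h1]
  simp only [hh]
  rw [hcast, Complex.Gamma_one]
  have hmel : mellin (fk F (n + 1)) 1 = ∫ u in Set.Ioi (0 : ℝ), fk F (n + 1) u := by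
    simp [mellin]
  rw [hmel]
  have hintg : IntegrableOn (fk F (n + 1)) (Set.Ioi 0) := by
    have h2 := fk_mellinConvergent hF hdecay (n + 1) (w := 1) (by norm_num)
    simpa [MellinConvergent] using h2
  have hderiv : ∀ x ∈ Set.Ici (0 : ℝ),
      HasDerivAt (fun u : ℝ => -(fk F n u)) (fk F (n + 1) x) x := by
    intro x _
    have := (fk_hasDerivAt hF n x).neg
    simp only [neg_neg] at this
    exact this
  have htend : Filter.Tendsto (fun u : ℝ => -(fk F n u)) Filter.atTop (nhds 0) := by
    have h2 := (hdecay 0 n).comp tendsto_neg_atTop_atBot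
    have h3 : Filter.Tendsto (fun u : ℝ => ‖fk F n u‖) Filter.atTop (nhds 0) := by
      simpa [fk, Function.comp_def] using h2
    have h4 : Filter.Tendsto (fk F n) Filter.atTop (nhds 0) := by
      rw [tendsto_zero_iff_norm_tendsto_zero]
      simpa using h3
    simpa using h4.neg
  have hFTC := integral_Ioi_of_hasDerivAt_of_tendsto' hderiv hintg htend
  rw [hFTC]
  simp [fk]
end
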